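/- arXiv:2202.13909 — 2 statements merged into one kernel-verified Lean document; each statement's English description precedes it below -/
import Mathlib

section
/- Let φ(z) = (az+b)/(cz+d) (a,b,c,d ∈ ℂ, ad−bc ≠ 0) be a linear fractional self-map of the open unit disk 𝔻, and let μ ∈ ℂ with |μ| = 1. Then the composition operator C_φ on the Hardy space H² is J_μ-normal if and only if C_φ is normal (equivalently, if and only if φ(z) = αz for some α ∈ ℂ with |α| ≤ 1). -/
open scoped ComplexConjugate InnerProductSpace ENNReal NNReal
open Complex Metric

noncomputable section

abbrev H2 : Type := lp (fun _ : ℕ => ℂ) 2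

namespace H2

/-- Evaluation of an element of `H²` (given by its sequence of Taylor coefficients)
at a point `z` of the unit disk: `f(z) = ∑ aₙ zⁿ`. -/
def eval (f : H2) (z : ℂ) : ℂ := ∑' n : ℕ, (f : ∀ _ : ℕ, ℂ) n * z ^ n

/-- The Szegő kernel function `K_w(z) = 1/(1 - conj w * z)`. -/
def ker (w z : ℂ) : ℂ := (1 - conj w * z)⁻¹

lemma kernel_memℓp (w : ℂ) (hw : ‖w‖ < 1) :
    Memℓp (fun n : ℕ => (conj w) ^ n) 2 := by
  apply memℓp_gen
  have hsum : Summable (fun n : ℕ => (‖w‖ ^ 2) ^ n) :=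
    summable_geometric_of_lt_one (by positivity) (by nlinarith [norm_nonneg w])
  refine hsum.congr fun n => ?_
  have h2 : ((2 : ℝ≥0∞).toReal) = ((2 : ℕ) : ℝ) := by simp
  rw [h2, Real.rpow_natCast]
  simp [norm_pow, ← pow_mul, Nat.mul_comm]

/-- The reproducing kernel of `H²` at `w` in the unit disk, as an element of `H²`. -/
def kernel (w : ℂ) : H2 :=
  if hw : ‖w‖ < 1 then ⟨fun n : ℕ => (conj w) ^ n, kernel_memℓp w hw⟩ else 0

/-- `T` is the composition operator `C_φ` on `H²`. -/
def IsCompOp (φ : ℂ → ℂ) (T : H2 →L[ℂ] H2) : Prop :=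
  ∀ f : H2, ∀ z : ℂ, ‖z‖ < 1 → eval (T f) z = eval f (φ z)

/-- `W` is the weighted composition operator `W_{ψ,φ}` on `H²`. -/
def IsWCompOp (ψ φ : ℂ → ℂ) (W : H2 →L[ℂ] H2) : Prop :=
  ∀ f : H2, ∀ z : ℂ, ‖z‖ < 1 → eval (W f) z = ψ z * eval f (φ z)

/-- A conjugation on `H²`: a conjugate-linear involution satisfying `⟪Cx, Cy⟫ = ⟪y, x⟫`. -/
structure IsConjugation (C : H2 → H2) : Prop where
  map_add : ∀ x y : H2, C (x + y) = C x + C y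
  map_smul : ∀ (c : ℂ) (x : H2), C (c • x) = conj c • C x
  invol : ∀ x : H2, C (C x) = x
  inner_conj : ∀ x y : H2, ⟪C x, C y⟫_ℂ = ⟪y, x⟫_ℂ

/-- `T` is `C`-normal: `C T* T C = T T*`. -/
def CNormal (C : H2 → H2) (T : H2 →L[ℂ] H2) : Prop :=
  ∀ x : H2, C ((ContinuousLinearMap.adjoint T) (T (C x)))
      = T ((ContinuousLinearMap.adjoint T) x)

/-- `T` is a normal operator: `T* T = T T*`. -/
def IsNormalOp (T : H2 →L[ℂ] H2) : Prop :=
  (ContinuousLinearMap.adjoint T).comp T = T.comp (ContinuousLinearMap.adjoint T)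

/-- `T` is a unitary operator. -/
def IsUnitaryOp (T : H2 →L[ℂ] H2) : Prop :=
  T.comp (ContinuousLinearMap.adjoint T) = ContinuousLinearMap.id ℂ H2 ∧
  (ContinuousLinearMap.adjoint T).comp T = ContinuousLinearMap.id ℂ H2

/-- `C` is the conjugation `J_μ` on `H²`: `(J_μ f)(z) = conj (f (μ * conj z))`. -/
def IsJmu (μ : ℂ) (C : H2 → H2) : Prop :=
  ∀ f : H2, ∀ z : ℂ, ‖z‖ < 1 → eval (C f) z = conj (eval f (μ * conj z))

/-- `ξ_p(z) = √(1-|p|²) / (1 - conj p * z)`. -/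
def xi (p z : ℂ) : ℂ := (Real.sqrt (1 - ‖p‖ ^ 2) : ℂ) / (1 - conj p * z)

/-- `τ_p(z) = λ (p - z) / (1 - conj p * z)`. -/
def tau (p lam z : ℂ) : ℂ := lam * (p - z) / (1 - conj p * z)

/-- `C` is the conjugation `J W_{ξ_p, τ_p}` on `H²`:
`(C f)(z) = conj (ξ_p(conj z) * f (τ_p (conj z)))`. -/
def IsJW (p lam : ℂ) (C : H2 → H2) : Prop :=
  ∀ f : H2, ∀ z : ℂ, ‖z‖ < 1 →
    eval (C f) z = conj (xi p (conj z) * eval f (tau p lam (conj z)))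

end H2

/-!
Normality and `J_μ`-normality both give `‖C_φ eₙ‖ = ‖C_φ* eₙ‖` on the monomials `eₙ = zⁿ`
(for `J_μ` because `J_μ eₙ = conj μⁿ eₙ`). For `n = 0` this reads `‖K_{φ(0)}‖ = 1`, so `φ(0) = 0`;
then `C_φ* e₁ = conj φ'(0) e₁` by the chain rule, and `‖φ‖ = ‖C_φ e₁‖ = |φ'(0)|` leaves no room
for Taylor coefficients of `φ` beyond the first, i.e. `φ(z) = φ'(0) z`. Conversely, for
`φ(z) = αz` the operators `C_φ`, `C_φ*` and `J_μ` act on Taylor coefficients by `aₙ ↦ αⁿ aₙ`,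
`aₙ ↦ conj αⁿ aₙ` and `aₙ ↦ conj μⁿ conj aₙ`, and both identities are checked coefficientwise.
-/

lemma lp.eq_single_of_norm_le {𝕜 ι : Type*} [RCLike 𝕜] [DecidableEq ι] {G : ι → Type*}
    [∀ i, NormedAddCommGroup (G i)] [∀ i, InnerProductSpace 𝕜 (G i)] (f : lp G 2) (i : ι)
    (h : ‖f‖ ≤ ‖f i‖) : f = lp.single 2 i (f i) := by
  have horth : ⟪lp.single 2 i (f i), f - lp.single 2 i (f i)⟫_𝕜 = 0 := by
    simp [lp.inner_single_left]
  have hpyth := norm_add_sq_eq_norm_sq_add_norm_sq_of_inner_eq_zero _ _ horth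
  rw [add_sub_cancel, lp.norm_single (by norm_num)] at hpyth
  rw [← sub_eq_zero, ← norm_eq_zero, ← sq_eq_zero_iff]
  nlinarith [norm_nonneg f, norm_nonneg (f i), sq_nonneg ‖f - lp.single 2 i (f i)‖]

namespace H2

lemma summable_eval (f : H2) {z : ℂ} (hz : ‖z‖ < 1) :
    Summable (fun n : ℕ => (f : ∀ _ : ℕ, ℂ) n * z ^ n) := by
  refine Summable.of_norm_bounded
    ((summable_geometric_of_lt_one (norm_nonneg z) hz).mul_left ‖f‖) fun n => ?_
  rw [norm_mul, norm_pow]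
  gcongr
  exact lp.norm_apply_le_norm two_ne_zero f n

lemma hasFPowerSeriesOnBall_eval (f : H2) :
    HasFPowerSeriesOnBall (eval f) (FormalMultilinearSeries.ofScalars ℂ (f : ∀ _ : ℕ, ℂ)) 0 1 where
  r_le := by
    refine ENNReal.le_of_forall_nnreal_lt fun r hr => ?_
    refine FormalMultilinearSeries.le_radius_of_bound _ ‖f‖ fun n => ?_
    rw [FormalMultilinearSeries.ofScalars_norm]
    have hr1 : (r : ℝ) ^ n ≤ 1 := pow_le_one₀ r.coe_nonneg (by exact_mod_cast hr.le)
    simpa using mul_le_mul (lp.norm_apply_le_norm two_ne_zero f n) hr1 (by positivity)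
      (norm_nonneg f)
  r_pos := one_pos
  hasSum {y} hy := by
    have hy' : ‖y‖ < 1 := by simpa [← ofReal_norm, ENNReal.ofReal_lt_one] using hy
    simpa [FormalMultilinearSeries.ofScalars_apply_eq, eval, mul_comm] using
      (summable_eval f hy').hasSum

lemma ext_eval {f g : H2} (h : ∀ z : ℂ, ‖z‖ < 1 → eval f z = eval g z) : f = g := by
  have hfg : eval f =ᶠ[nhds 0] eval g := by
    filter_upwards [ball_mem_nhds (0 : ℂ) one_pos] with z hz using h z (by simpa using hz)
  have := ((hasFPowerSeriesOnBall_eval f).hasFPowerSeriesAt.congr hfg).eq_formalMultilinearSeries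
    (hasFPowerSeriesOnBall_eval g).hasFPowerSeriesAt
  exact lp.ext (FormalMultilinearSeries.ofScalars_series_injective ℂ ℂ this)

lemma hasDerivAt_eval (f : H2) : HasDerivAt (eval f) ((f : ∀ _ : ℕ, ℂ) 1) 0 := by
  simpa [FormalMultilinearSeries.ofScalars_apply_eq] using
    (hasFPowerSeriesOnBall_eval f).hasFPowerSeriesAt.hasDerivAt

lemma eval_single (n : ℕ) (c z : ℂ) : eval (lp.single 2 n c) z = c * z ^ n := by
  rw [eval, tsum_eq_single n fun m hm => by simp [hm]]
  simp

lemma kernel_apply {w : ℂ} (hw : ‖w‖ < 1) (n : ℕ) :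
    (kernel w : ∀ _ : ℕ, ℂ) n = conj w ^ n := by
  rw [kernel, dif_pos hw]

lemma kernel_zero : kernel 0 = lp.single 2 0 1 :=
  lp.ext <| funext fun n => by
    rw [kernel_apply (by simp), lp.single_apply, Pi.single_apply, map_zero, zero_pow_eq]

lemma inner_kernel_left (f : H2) {w : ℂ} (hw : ‖w‖ < 1) : ⟪kernel w, f⟫_ℂ = eval f w := by
  rw [lp.inner_eq_tsum, eval]
  refine tsum_congr fun n => ?_
  simp [kernel_apply hw, RCLike.inner_apply, mul_comm]

lemma norm_kernel_sq {w : ℂ} (hw : ‖w‖ < 1) : ‖kernel w‖ ^ 2 = (1 - ‖w‖ ^ 2)⁻¹ := by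
  have hw2 : ‖w‖ ^ 2 < 1 := by nlinarith [norm_nonneg w]
  have h := lp.norm_rpow_eq_tsum (p := 2) (by norm_num) (kernel w)
  simp only [ENNReal.toReal_ofNat, Real.rpow_two] at h
  rw [h, ← tsum_geometric_of_lt_one (by positivity) hw2]
  refine tsum_congr fun n => ?_
  rw [kernel_apply hw, norm_pow, RCLike.norm_conj, ← pow_mul, ← pow_mul, mul_comm]

def dilate (α : ℂ) (hα : ‖α‖ ≤ 1) (f : H2) : H2 :=
  ⟨fun n => α ^ n * (f : ∀ _ : ℕ, ℂ) n, (lp.memℓp f).mono' fun n => by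
    rw [norm_mul, norm_pow]
    exact mul_le_of_le_one_left (norm_nonneg _) (pow_le_one₀ (norm_nonneg _) hα)⟩

lemma dilate_apply (α : ℂ) (hα : ‖α‖ ≤ 1) (f : H2) (n : ℕ) :
    (dilate α hα f : ∀ _ : ℕ, ℂ) n = α ^ n * (f : ∀ _ : ℕ, ℂ) n := rfl

lemma eval_dilate (α : ℂ) (hα : ‖α‖ ≤ 1) (f : H2) (z : ℂ) :
    eval (dilate α hα f) z = eval f (α * z) :=
  tsum_congr fun n => by rw [dilate_apply, mul_pow]; ring

lemma IsJmu.apply_eq_dilate_star {μ : ℂ} (hμ : ‖μ‖ = 1) {C : H2 → H2} (hCμ : IsJmu μ C)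
    (f : H2) : C f = dilate (conj μ) (by rw [RCLike.norm_conj, hμ]) (star f) :=
  ext_eval fun z hz => by
    rw [hCμ f z hz, eval_dilate, eval, eval, conj_tsum]
    refine tsum_congr fun n => ?_
    simp [lp.star_apply]

lemma IsJmu.apply_single {μ : ℂ} {C : H2 → H2} (hCμ : IsJmu μ C) (n : ℕ) :
    C (lp.single 2 n 1) = conj μ ^ n • lp.single 2 n 1 :=
  ext_eval fun z hz => by
    rw [hCμ _ z hz, ← lp.single_smul, smul_eq_mul, mul_one, eval_single, eval_single]
    simp [mul_pow]

lemma isNormalOp_iff_isStarNormal {T : H2 →L[ℂ] H2} : IsNormalOp T ↔ IsStarNormal T := by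
  rw [isStarNormal_iff, commute_iff_eq, ContinuousLinearMap.star_eq_adjoint]
  rfl

lemma IsNormalOp.norm_apply_eq_norm_adjoint_apply {T : H2 →L[ℂ] H2} (hT : IsNormalOp T)
    (x : H2) : ‖T x‖ = ‖ContinuousLinearMap.adjoint T x‖ :=
  ContinuousLinearMap.isStarNormal_iff_norm_eq_adjoint.mp (isNormalOp_iff_isStarNormal.mp hT) x

lemma CNormal.norm_apply_conj_eq_norm_adjoint_apply {C : H2 → H2} {T : H2 →L[ℂ] H2}
    (hC : IsConjugation C) (hT : CNormal C T) (x : H2) :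
    ‖T (C x)‖ = ‖ContinuousLinearMap.adjoint T x‖ := by
  let T' := ContinuousLinearMap.adjoint T
  have h : ((‖T (C x)‖ ^ 2 : ℝ) : ℂ) = ((‖T' x‖ ^ 2 : ℝ) : ℂ) := by
    push_cast
    calc (‖T (C x)‖ : ℂ) ^ 2 = ⟪T (C x), T (C x)⟫_ℂ :=
          (inner_self_eq_norm_sq_to_K (𝕜 := ℂ) (T (C x))).symm
      _ = ⟪C x, T' (T (C x))⟫_ℂ := (ContinuousLinearMap.adjoint_inner_right T _ _).symm
      _ = ⟪C (T' (T (C x))), C (C x)⟫_ℂ := (hC.inner_conj _ _).symm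
      _ = ⟪T (T' x), x⟫_ℂ := by rw [hT x, hC.invol]
      _ = ⟪T' x, T' x⟫_ℂ := (ContinuousLinearMap.adjoint_inner_right T _ _).symm
      _ = (‖T' x‖ : ℂ) ^ 2 := inner_self_eq_norm_sq_to_K (𝕜 := ℂ) (T' x)
  exact (sq_eq_sq₀ (norm_nonneg _) (norm_nonneg _)).mp (Complex.ofReal_injective h)

namespace IsCompOp

variable {φ : ℂ → ℂ} {T : H2 →L[ℂ] H2}

lemma adjoint_kernel (hT : IsCompOp φ T) (hself : ∀ z : ℂ, ‖z‖ < 1 → ‖φ z‖ < 1) {w : ℂ}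
    (hw : ‖w‖ < 1) : ContinuousLinearMap.adjoint T (kernel w) = kernel (φ w) :=
  ext_inner_right ℂ fun g => by
    rw [ContinuousLinearMap.adjoint_inner_left, inner_kernel_left _ hw,
      inner_kernel_left _ (hself w hw), hT g w hw]

lemma apply_single_zero (hT : IsCompOp φ T) : T (lp.single 2 0 1) = lp.single 2 0 1 :=
  ext_eval fun z hz => by rw [hT _ z hz, eval_single, eval_single, pow_zero, pow_zero]

lemma eval_apply_single_one (hT : IsCompOp φ T) {z : ℂ} (hz : ‖z‖ < 1) :
    eval (T (lp.single 2 1 1)) z = φ z := by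
  rw [hT _ z hz, eval_single, one_mul, pow_one]

lemma map_zero_of_norm_eq (hT : IsCompOp φ T) (hself : ∀ z : ℂ, ‖z‖ < 1 → ‖φ z‖ < 1)
    (h : ‖T (lp.single 2 0 1)‖ = ‖ContinuousLinearMap.adjoint T (lp.single 2 0 1)‖) :
    φ 0 = 0 := by
  have hφ0 := hself 0 (by simp)
  rw [hT.apply_single_zero, ← kernel_zero, hT.adjoint_kernel hself (by simp)] at h
  have h2 := norm_kernel_sq hφ0
  rw [← h, kernel_zero, lp.norm_single (by norm_num), norm_one, one_pow, eq_comm, inv_eq_one,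
    sub_eq_self, sq_eq_zero_iff, norm_eq_zero] at h2
  exact h2

/-- The chain rule `(g ∘ φ)'(0) = g'(0) φ'(0)`, read on Taylor coefficients. -/
lemma coeff_one_apply (hT : IsCompOp φ T) (h0 : φ 0 = 0) (g : H2) :
    (T g : ∀ _ : ℕ, ℂ) 1 = (g : ∀ _ : ℕ, ℂ) 1 * (T (lp.single 2 1 1) : ∀ _ : ℕ, ℂ) 1 := by
  have hcomp : eval (T g) =ᶠ[nhds 0] eval g ∘ eval (T (lp.single 2 1 1)) := by
    filter_upwards [ball_mem_nhds (0 : ℂ) one_pos] with z hz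
    have hz' : ‖z‖ < 1 := by simpa using hz
    rw [Function.comp_apply, hT g z hz', hT.eval_apply_single_one hz']
  have hg : HasDerivAt (eval g) ((g : ∀ _ : ℕ, ℂ) 1) (eval (T (lp.single 2 1 1)) 0) := by
    rw [hT.eval_apply_single_one (by simp), h0]
    exact hasDerivAt_eval g
  exact (hasDerivAt_eval (T g)).unique
    ((hg.comp 0 (hasDerivAt_eval _)).congr_of_eventuallyEq hcomp)

lemma adjoint_single_one (hT : IsCompOp φ T) (h0 : φ 0 = 0) :
    ContinuousLinearMap.adjoint T (lp.single 2 1 1)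
      = lp.single 2 1 (conj ((T (lp.single 2 1 1) : ∀ _ : ℕ, ℂ) 1)) :=
  ext_inner_right ℂ fun g => by
    rw [ContinuousLinearMap.adjoint_inner_left, lp.inner_single_left, lp.inner_single_left,
      hT.coeff_one_apply h0]
    simp [RCLike.inner_apply, mul_comm]

lemma exists_eq_mul_of_norm_eq (hT : IsCompOp φ T) (hself : ∀ z : ℂ, ‖z‖ < 1 → ‖φ z‖ < 1)
    (h : ∀ n, ‖T (lp.single 2 n 1)‖ = ‖ContinuousLinearMap.adjoint T (lp.single 2 n 1)‖) :
    ∃ α : ℂ, ‖α‖ ≤ 1 ∧ ∀ z : ℂ, ‖z‖ < 1 → φ z = α * z := by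
  have h0 := hT.map_zero_of_norm_eq hself (h 0)
  have hF := lp.eq_single_of_norm_le (𝕜 := ℂ) (T (lp.single 2 1 1)) 1 <| le_of_eq <| by
    rw [h 1, hT.adjoint_single_one h0, lp.norm_single (by norm_num), RCLike.norm_conj]
  generalize (T (lp.single 2 1 1) : ∀ _ : ℕ, ℂ) 1 = α at hF
  have hφ : ∀ z : ℂ, ‖z‖ < 1 → φ z = α * z := fun z hz => by
    rw [← hT.eval_apply_single_one hz, hF, eval_single, pow_one]
  refine ⟨α, ?_, hφ⟩
  rw [← coe_nnnorm, NNReal.coe_le_one]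
  refine NNReal.le_of_forall_lt_one_mul_le fun r hr => ?_
  have hr' : ‖(r : ℂ)‖ < 1 := by simpa using hr
  have hαr := hself r hr'
  rw [hφ r hr', norm_mul, Complex.norm_real, Real.norm_of_nonneg r.coe_nonneg] at hαr
  rw [← NNReal.coe_le_coe]
  push_cast
  linarith

lemma apply_eq_dilate (hT : IsCompOp φ T) {α : ℂ} (hα : ‖α‖ ≤ 1)
    (hφ : ∀ z : ℂ, ‖z‖ < 1 → φ z = α * z) (f : H2) : T f = dilate α hα f :=
  ext_eval fun z hz => by rw [hT f z hz, hφ z hz, eval_dilate]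

lemma adjoint_apply_eq_dilate (hT : IsCompOp φ T) {α : ℂ} (hα : ‖α‖ ≤ 1)
    (hφ : ∀ z : ℂ, ‖z‖ < 1 → φ z = α * z) (f : H2) :
    ContinuousLinearMap.adjoint T f = dilate (conj α) (by rwa [RCLike.norm_conj]) f := by
  refine ext_inner_right ℂ fun g => ?_
  rw [ContinuousLinearMap.adjoint_inner_left, hT.apply_eq_dilate hα hφ, lp.inner_eq_tsum,
    lp.inner_eq_tsum]
  refine tsum_congr fun n => ?_
  simp only [dilate_apply, RCLike.inner_apply, map_mul, map_pow, Complex.conj_conj]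
  ring

lemma isNormalOp_of_eq_mul (hT : IsCompOp φ T) {α : ℂ} (hα : ‖α‖ ≤ 1)
    (hφ : ∀ z : ℂ, ‖z‖ < 1 → φ z = α * z) : IsNormalOp T := by
  refine ContinuousLinearMap.ext fun f => lp.ext <| funext fun n => ?_
  simp only [ContinuousLinearMap.comp_apply, hT.apply_eq_dilate hα hφ,
    hT.adjoint_apply_eq_dilate hα hφ, dilate_apply]
  ring

lemma cNormal_of_eq_mul (hT : IsCompOp φ T) {α : ℂ} (hα : ‖α‖ ≤ 1)
    (hφ : ∀ z : ℂ, ‖z‖ < 1 → φ z = α * z) {μ : ℂ} (hμ : ‖μ‖ = 1) {C : H2 → H2}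
    (hCμ : IsJmu μ C) : CNormal C T := by
  intro f
  refine lp.ext <| funext fun n => ?_
  have hμn : conj μ ^ n * μ ^ n = 1 := by
    rw [← mul_pow, RCLike.conj_mul, hμ]
    simp
  simp only [hCμ.apply_eq_dilate_star hμ, hT.apply_eq_dilate hα hφ,
    hT.adjoint_apply_eq_dilate hα hφ, dilate_apply, lp.star_apply, RCLike.star_def, map_mul,
    map_pow, Complex.conj_conj]
  linear_combination (α ^ n * conj α ^ n * (f : ∀ _ : ℕ, ℂ) n) * hμn

end IsCompOp

end H2

theorem stmt0_general (μ : ℂ) (φ : ℂ → ℂ)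
    (hself : ∀ z : ℂ, ‖z‖ < 1 → ‖φ z‖ < 1)
    (hμ : ‖μ‖ = 1)
    (T : H2 →L[ℂ] H2) (hT : H2.IsCompOp φ T)
    (C : H2 → H2) (hC : H2.IsConjugation C) (hCμ : H2.IsJmu μ C) :
    (H2.CNormal C T ↔ H2.IsNormalOp T) ∧
      (H2.IsNormalOp T ↔ ∃ α : ℂ, ‖α‖ ≤ 1 ∧ ∀ z : ℂ, ‖z‖ < 1 → φ z = α * z) := by
  have normal_iff : H2.IsNormalOp T ↔ ∃ α : ℂ, ‖α‖ ≤ 1 ∧ ∀ z : ℂ, ‖z‖ < 1 → φ z = α * z :=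
    ⟨fun hN => hT.exists_eq_mul_of_norm_eq hself fun n => hN.norm_apply_eq_norm_adjoint_apply _,
      fun ⟨α, hα, hφ⟩ => hT.isNormalOp_of_eq_mul hα hφ⟩
  refine ⟨⟨fun hCN => normal_iff.mpr <| hT.exists_eq_mul_of_norm_eq hself fun n => ?_,
    fun hN => ?_⟩, normal_iff⟩
  · rw [← hCN.norm_apply_conj_eq_norm_adjoint_apply hC, hCμ.apply_single, map_smul, norm_smul,
      norm_pow, RCLike.norm_conj, hμ, one_pow, one_mul]
  · obtain ⟨α, hα, hφ⟩ := normal_iff.mp hN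
    exact hT.cNormal_of_eq_mul hα hφ hμ hCμ

/-- Let `φ(z) = (az+b)/(cz+d)` be a linear fractional self-map of the unit disk and `|μ| = 1`.
Then `C_φ` is `J_μ`-normal iff `C_φ` is normal (equivalently, iff `φ(z) = αz` with `|α| ≤ 1`). -/
theorem stmt0 (a b c d μ : ℂ) (φ : ℂ → ℂ)
    (hφ : ∀ z : ℂ, φ z = (a * z + b) / (c * z + d))
    (hdet : a * d - b * c ≠ 0)
    (hden : ∀ z : ℂ, ‖z‖ < 1 → c * z + d ≠ 0)
    (hself : ∀ z : ℂ, ‖z‖ < 1 → ‖φ z‖ < 1)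
    (hμ : ‖μ‖ = 1)
    (T : H2 →L[ℂ] H2) (hT : H2.IsCompOp φ T)
    (C : H2 → H2) (hC : H2.IsConjugation C) (hCμ : H2.IsJmu μ C) :
    (H2.CNormal C T ↔ H2.IsNormalOp T) ∧
      (H2.IsNormalOp T ↔ ∃ α : ℂ, ‖α‖ ≤ 1 ∧ ∀ z : ℂ, ‖z‖ < 1 → φ z = α * z) :=
  stmt0_general μ φ hself hμ T hT C hC hCμ
end
end

section
/- Let a₀ ∈ 𝔻, a₁, a₂ ∈ ℝ with a₂ ≠ 0, let φ(z) = a₀ + a₁z/(1 − conj(a₀)·z) map 𝔻 into itself, let ψ(z) = a₂/(1 − conj(a₀)·z), let p ∈ 𝔻 \ {0}, and let λ ∈ ℂ with |λ| = 1 and λp = conj(p). Then the weighted composition operator W_{ψ,φ} on H² is JW_{ξ_p,τ_p}-normal and Hermitian if and only if ((a₁ − |a₀|²)² − 1)·|p|² = −2·(a₁ − |a₀|² + 1)·Re(a₀·p). -/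
open scoped ComplexConjugate InnerProductSpace ENNReal NNReal
open Complex Metric

noncomputable section

/-!
`W = W_{ψ,φ}` acts on kernels by `W K_w = conj (ψ w) K_{φ w}`, which is what `W*` does to them,
so `W` is Hermitian. For Hermitian `W`, `C`-normality says that `C` commutes with `W²`, and `W²` is
again of the form `ψ = c/(1 - ā z)`, `φ = (a + t z)/(1 - ā z)`, now with
`a = a₀ (T + 1)/(1 - |a₀|²)` and `t = (T² - |a₀|²)/(1 - |a₀|²)`, where `T = a₁ - |a₀|²`.
Applied to the constant `1`, commutation with `C` forces the weights on both sides to agree, which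
for such symbols means `conj a + t p = p - a conj λ`; conversely this condition also makes
`τ_p ∘ conj` intertwine `φ`, so it gives commutation. Multiplied by `conj p` it reads
`2 Re (a p) = (1 - t) |p|²`.
-/

namespace H2

lemma one_sub_mul_ne_zero {R : Type*} [NormedRing R] [NormOneClass R] {a u : R} (ha : ‖a‖ < 1)
    (hu : ‖u‖ < 1) : 1 - a * u ≠ 0 := by
  have : ‖a * u‖ < 1 :=
    (norm_mul_le a u).trans_lt (by nlinarith [norm_nonneg a, norm_nonneg u])
  rw [sub_ne_zero]
  rintro h
  rw [← h, norm_one] at this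
  exact lt_irrefl _ this

lemma one_sub_conj_mul_ne_zero {a u : ℂ} (ha : ‖a‖ < 1) (hu : ‖u‖ < 1) :
    1 - conj a * u ≠ 0 :=
  one_sub_mul_ne_zero (by rwa [RCLike.norm_conj]) hu

lemma eval_kernel {w z : ℂ} (hw : ‖w‖ < 1) (hz : ‖z‖ < 1) :
    eval (kernel w) z = (1 - conj w * z)⁻¹ := by
  have h : ‖conj w * z‖ < 1 := by
    rw [norm_mul, RCLike.norm_conj]
    nlinarith [norm_nonneg w, norm_nonneg z]
  rw [eval, ← tsum_geometric_of_norm_lt_one h]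
  exact tsum_congr fun n => by rw [kernel_apply hw, mul_pow]

lemma eval_kernel_zero {z : ℂ} (hz : ‖z‖ < 1) : eval (kernel 0) z = 1 := by
  rw [eval_kernel (by norm_num) hz, map_zero, zero_mul, sub_zero, inv_one]

lemma eval_eq_inner (f : H2) {z : ℂ} (hz : ‖z‖ < 1) : eval f z = ⟪kernel z, f⟫_ℂ := by
  rw [lp.inner_eq_tsum, eval]
  exact tsum_congr fun n => by
    rw [kernel_apply hz, RCLike.inner_apply, map_pow, RCLike.conj_conj, mul_comm]

lemma eval_smul (c : ℂ) (f : H2) (z : ℂ) : eval (c • f) z = c * eval f z := by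
  rw [eval, eval, ← tsum_mul_left]
  exact tsum_congr fun n => by rw [lp.coeFn_smul, Pi.smul_apply, smul_eq_mul, mul_assoc]

lemma eq_zero_of_eval_eq_zero (f : H2) (h : ∀ z : ℂ, ‖z‖ < 1 → eval f z = 0) : f = 0 := by
  set P := FormalMultilinearSeries.ofScalars ℂ (fun n => (f : ∀ _ : ℕ, ℂ) n)
  have hrad : (0 : ℝ≥0∞) < P.radius := by
    refine lt_of_lt_of_le (by norm_num : (0 : ℝ≥0∞) < (1 : ℝ≥0)) ?_
    refine P.le_radius_of_bound ‖f‖ fun n => ?_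
    rw [FormalMultilinearSeries.ofScalars_norm]
    simpa using lp.norm_apply_le_norm (by norm_num) f n
  have hsum_eq : P.sum =ᶠ[nhds 0] 0 := by
    filter_upwards [ball_mem_nhds (0 : ℂ) one_pos] with z hz
    rw [Pi.zero_apply, ← h z (by simpa using hz)]
    exact tsum_congr fun n => by rw [FormalMultilinearSeries.ofScalars_apply_eq, smul_eq_mul]
  have hP : P = 0 :=
    ((P.hasFPowerSeriesOnBall hrad).hasFPowerSeriesAt.congr hsum_eq).eq_zero
  refine lp.ext (funext fun n => ?_)
  have hn : P n = 0 := by rw [hP]; rfl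
  simpa using (FormalMultilinearSeries.ofScalars_eq_zero ℂ n).mp hn

lemma norm_tau_lt_one {p lam z : ℂ} (hp : ‖p‖ < 1) (hlam : ‖lam‖ = 1) (hz : ‖z‖ < 1) :
    ‖tau p lam z‖ < 1 := by
  have hden := one_sub_conj_mul_ne_zero hp hz
  have hgap : ‖1 - conj p * z‖ ^ 2 - ‖p - z‖ ^ 2 = (1 - ‖p‖ ^ 2) * (1 - ‖z‖ ^ 2) := by
    simp only [← Complex.normSq_eq_norm_sq]
    apply Complex.ofReal_injective
    push_cast
    simp only [← Complex.mul_conj, map_sub, map_mul, map_one, Complex.conj_conj]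
    ring
  have hpos : 0 < (1 - ‖p‖ ^ 2) * (1 - ‖z‖ ^ 2) := by
    apply mul_pos <;> nlinarith [norm_nonneg p, norm_nonneg z]
  rw [tau, norm_div, norm_mul, hlam, one_mul, div_lt_one (norm_pos_iff.mpr hden)]
  nlinarith [norm_nonneg (p - z), norm_nonneg (1 - conj p * z)]

lemma IsWCompOp.comp {ψ φ ψ' φ' : ℂ → ℂ} {W W' : H2 →L[ℂ] H2} (hW : IsWCompOp ψ φ W)
    (hW' : IsWCompOp ψ' φ' W') (hφ : ∀ z : ℂ, ‖z‖ < 1 → ‖φ z‖ < 1) :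
    IsWCompOp (fun z => ψ z * ψ' (φ z)) (φ' ∘ φ) (W.comp W') := fun f z hz => by
  rw [ContinuousLinearMap.comp_apply, hW _ z hz, hW' f _ (hφ z hz), mul_assoc,
    Function.comp_apply]

/-- Every weighted composition operator satisfies `W* K_w = conj (ψ w) K_{φ w}`, so `hker` says
that `W` and `W*` agree on the reproducing kernels. -/
lemma IsWCompOp.adjoint_eq_self {ψ φ : ℂ → ℂ} {W : H2 →L[ℂ] H2} (hW : IsWCompOp ψ φ W)
    (hφ : ∀ z : ℂ, ‖z‖ < 1 → ‖φ z‖ < 1)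
    (hker : ∀ w : ℂ, ‖w‖ < 1 → W (kernel w) = conj (ψ w) • kernel (φ w)) :
    ContinuousLinearMap.adjoint W = W := by
  refine ContinuousLinearMap.ext fun f => ext_eval fun z hz => ?_
  rw [eval_eq_inner _ hz, ContinuousLinearMap.adjoint_inner_right, hker z hz,
    inner_smul_left, Complex.conj_conj, ← eval_eq_inner f (hφ z hz), ← hW f z hz]

lemma cNormal_iff_of_adjoint_eq_self {C : H2 → H2} (hC : Function.Involutive C)
    {T : H2 →L[ℂ] H2} (hT : ContinuousLinearMap.adjoint T = T) :
    CNormal C T ↔ ∀ x : H2, (T.comp T) (C x) = C ((T.comp T) x) := by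
  simp only [CNormal, hT, ContinuousLinearMap.comp_apply]
  refine ⟨fun h x => ?_, fun h x => by rw [h, hC]⟩
  rw [← h, hC]

section Intertwining

variable {p lam : ℂ} {ψ φ : ℂ → ℂ} {W : H2 →L[ℂ] H2} {C : H2 → H2}

lemma IsWCompOp.weight_eq_of_commute (hp : ‖p‖ < 1) (hlam : ‖lam‖ = 1) (hW : IsWCompOp ψ φ W)
    (hCJ : IsJW p lam C) (hφ : ∀ z : ℂ, ‖z‖ < 1 → ‖φ z‖ < 1)
    (hcomm : ∀ x : H2, W (C x) = C (W x)) {z : ℂ} (hz : ‖z‖ < 1) :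
    ψ z * conj (xi p (conj (φ z))) = conj (xi p (conj z) * ψ (tau p lam (conj z))) := by
  have hz' : ‖conj z‖ < 1 := by rwa [RCLike.norm_conj]
  have hφz' : ‖conj (φ z)‖ < 1 := by rw [RCLike.norm_conj]; exact hφ z hz
  have h := congrArg (fun g => eval g z) (hcomm (kernel 0))
  rw [hW _ z hz, hCJ _ _ (hφ z hz), hCJ _ z hz, hW _ _ (norm_tau_lt_one hp hlam hz'),
    eval_kernel_zero (norm_tau_lt_one hp hlam hφz'),
    eval_kernel_zero (hφ _ (norm_tau_lt_one hp hlam hz'))] at h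
  simpa only [mul_one, map_mul] using h

lemma IsWCompOp.commute_of_weight_eq (hp : ‖p‖ < 1) (hlam : ‖lam‖ = 1)
    (hW : IsWCompOp ψ φ W) (hCJ : IsJW p lam C) (hφ : ∀ z : ℂ, ‖z‖ < 1 → ‖φ z‖ < 1)
    (hweight : ∀ z : ℂ, ‖z‖ < 1 →
      ψ z * conj (xi p (conj (φ z))) = conj (xi p (conj z) * ψ (tau p lam (conj z))))
    (hint : ∀ z : ℂ, ‖z‖ < 1 → tau p lam (conj (φ z)) = φ (tau p lam (conj z)))
    (x : H2) : W (C x) = C (W x) := by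
  refine ext_eval fun z hz => ?_
  have hz' : ‖conj z‖ < 1 := by rwa [RCLike.norm_conj]
  rw [hW _ z hz, hCJ _ _ (hφ z hz), hCJ _ z hz, hW _ _ (norm_tau_lt_one hp hlam hz'), hint z hz,
    map_mul, ← mul_assoc, hweight z hz, ← map_mul, mul_assoc]

end Intertwining

lemma one_sub_mul_linFrac {K : Type*} [Field K] {a b t u z : K} (h : 1 - b * z ≠ 0) :
    (1 - b * z) * (1 - u * ((a + t * z) / (1 - b * z))) = 1 - a * u - (b + t * u) * z := by
  field_simp
  ring

lemma conj_xi_conj (p u : ℂ) : conj (xi p (conj u)) = Real.sqrt (1 - ‖p‖ ^ 2) / (1 - p * u) := by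
  simp only [xi, map_div₀, map_sub, map_one, map_mul, Complex.conj_conj, Complex.conj_ofReal]

lemma affine_div_affine_comp {K : Type*} [Field K] {α β γ δ x y : K} (hy : y ≠ 0) :
    (α + β * (x / y)) / (γ - δ * (x / y)) = (α * y + β * x) / (γ * y - δ * x) := by
  rw [← mul_div_mul_right _ _ hy]
  congr 1 <;> field_simp

lemma tau_eq_affine_div (p lam u : ℂ) :
    tau p lam u = (lam * p + (-lam) * u) / (1 - conj p * u) := by
  rw [tau]
  ring

lemma conj_add_mul_eq_sub_mul_iff {a p lam : ℂ} {t : ℝ} (hp0 : p ≠ 0) (hlp : lam * p = conj p) :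
    conj a + t * p = p - a * conj lam ↔ 2 * (a * p).re = (1 - t) * ‖p‖ ^ 2 := by
  have hlp' : conj lam * conj p = p := by simpa using congrArg conj hlp
  have key : (conj a + t * p - (p - a * conj lam)) * conj p
      = ((2 * (a * p).re - (1 - t) * ‖p‖ ^ 2 : ℝ) : ℂ) := by
    rw [Complex.ofReal_sub, ← Complex.add_conj]
    push_cast
    rw [← Complex.mul_conj', map_mul]
    linear_combination a * hlp'
  rw [← sub_eq_zero, ← mul_eq_zero_iff_right ((map_ne_zero conj).mpr hp0), key,
    Complex.ofReal_eq_zero, sub_eq_zero]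

/-- The symbols of the Hermitian weighted composition operators on `H²` (Cowen–Gunatillake–Ko),
`φ = a + a₁ z/(1 - ā z)` written as `(a + t z)/(1 - ā z)` with `t = a₁ - |a|²`. -/
structure IsLinFracSymbol (a : ℂ) (t c : ℝ) (ψ φ : ℂ → ℂ) : Prop where
  phi_eq : ∀ z : ℂ, ‖z‖ < 1 → φ z = (a + t * z) / (1 - conj a * z)
  psi_eq : ∀ z : ℂ, ‖z‖ < 1 → ψ z = c / (1 - conj a * z)
  den_ne_zero : ∀ z : ℂ, ‖z‖ < 1 → 1 - conj a * z ≠ 0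
  mapsTo : ∀ z : ℂ, ‖z‖ < 1 → ‖φ z‖ < 1

namespace IsLinFracSymbol

variable {a : ℂ} {t c : ℝ} {ψ φ : ℂ → ℂ} (h : IsLinFracSymbol a t c ψ φ)
include h

lemma apply_kernel {W : H2 →L[ℂ] H2} (hW : IsWCompOp ψ φ W) {w : ℂ} (hw : ‖w‖ < 1) :
    W (kernel w) = conj (ψ w) • kernel (φ w) := by
  refine ext_eval fun z hz => ?_
  have hconj : conj (1 - conj a * w) = 1 - a * conj w := by simp
  have hw0 : 1 - a * conj w ≠ 0 := by rw [← hconj]; exact (map_ne_zero _).mpr (h.den_ne_zero w hw)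
  have hl : (1 - conj a * z) * (1 - conj w * φ z)
      = 1 - a * conj w - (conj a + t * conj w) * z := by
    rw [h.phi_eq z hz]; exact one_sub_mul_linFrac (h.den_ne_zero z hz)
  have hr : (1 - a * conj w) * (1 - conj (φ w) * z)
      = 1 - conj a * z - (a + t * z) * conj w := by
    rw [h.phi_eq w hw, mul_comm _ z, map_div₀, hconj]
    simpa using one_sub_mul_linFrac (u := z) hw0
  rw [hW _ z hz, eval_smul, eval_kernel hw (h.mapsTo z hz), eval_kernel (h.mapsTo w hw) hz,
    h.psi_eq z hz, h.psi_eq w hw, map_div₀, hconj, Complex.conj_ofReal, div_eq_mul_inv,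
    div_eq_mul_inv, mul_assoc, mul_assoc, ← mul_inv, ← mul_inv, hl, hr]
  ring

lemma adjoint_eq_self {W : H2 →L[ℂ] H2} (hW : IsWCompOp ψ φ W) :
    ContinuousLinearMap.adjoint W = W :=
  hW.adjoint_eq_self h.mapsTo fun _ hw => h.apply_kernel hW hw

lemma weight_eq_iff {p lam : ℂ} (hc : c ≠ 0) (hp : ‖p‖ < 1) (hlam : ‖lam‖ = 1)
    (hlp : lam * p = conj p) {z : ℂ} (hz : ‖z‖ < 1) :
    ψ z * conj (xi p (conj (φ z))) = conj (xi p (conj z) * ψ (tau p lam (conj z))) ↔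
      (conj a + t * p) * z = (p - a * conj lam) * z := by
  have hz' : ‖conj z‖ < 1 := by rwa [RCLike.norm_conj]
  have hτ := norm_tau_lt_one hp hlam hz'
  have hpz := one_sub_conj_mul_ne_zero hp hz'
  have hs : (Real.sqrt (1 - ‖p‖ ^ 2) : ℂ) ≠ 0 := by
    have : 0 < 1 - ‖p‖ ^ 2 := by nlinarith [norm_nonneg p]
    exact_mod_cast (Real.sqrt_pos.mpr this).ne'
  have hX : (1 - conj a * z) * (1 - p * φ z) = 1 - a * p - (conj a + t * p) * z := by
    rw [h.phi_eq z hz]; exact one_sub_mul_linFrac (h.den_ne_zero z hz)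
  have hY : conj ((1 - conj p * conj z) * (1 - conj a * tau p lam (conj z)))
      = 1 - a * p - (p - a * conj lam) * z := by
    have hlp' : conj lam * conj p = p := by simpa using congrArg conj hlp
    rw [tau]
    field_simp
    simp only [map_sub, map_mul, map_one, Complex.conj_conj]
    linear_combination (-a) * hlp'
  have hX0 : 1 - a * p - (conj a + t * p) * z ≠ 0 := by
    rw [← hX]; exact mul_ne_zero (h.den_ne_zero z hz) (one_sub_mul_ne_zero hp (h.mapsTo z hz))
  have hY0 : 1 - a * p - (p - a * conj lam) * z ≠ 0 := by
    rw [← hY, map_ne_zero]; exact mul_ne_zero hpz (h.den_ne_zero _ hτ)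
  rw [conj_xi_conj, h.psi_eq z hz, h.psi_eq _ hτ, xi, div_mul_div_comm, div_mul_div_comm,
    map_div₀, hY, map_mul, Complex.conj_ofReal, Complex.conj_ofReal, mul_comm (c : ℂ), hX,
    div_eq_div_iff hX0 hY0, mul_right_inj' (mul_ne_zero hs (by exact_mod_cast hc)), eq_comm,
    sub_right_inj]

lemma tau_comm {p lam : ℂ} (hp : ‖p‖ < 1) (hlam : ‖lam‖ = 1)
    (hlp : lam * p = conj p) (hE : conj a + t * p = p - a * conj lam) {z : ℂ} (hz : ‖z‖ < 1) :
    tau p lam (conj (φ z)) = φ (tau p lam (conj z)) := by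
  have hz' : ‖conj z‖ < 1 := by rwa [RCLike.norm_conj]
  have hE' : a + t * conj p = conj p - conj a * lam := by simpa using congrArg conj hE
  have hY : 1 - a * conj z ≠ 0 := by simpa using (map_ne_zero conj).mpr (h.den_ne_zero z hz)
  have hconj : conj (φ z) = (conj a + t * conj z) / (1 - a * conj z) := by
    simp [h.phi_eq z hz, map_div₀]
  rw [hconj, h.phi_eq _ (norm_tau_lt_one hp hlam hz'), tau_eq_affine_div, tau_eq_affine_div,
    affine_div_affine_comp hY, affine_div_affine_comp (one_sub_conj_mul_ne_zero hp hz')]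
  congr 1
  · linear_combination (1 - a * conj z - t) * hlp - hE'
  · linear_combination conj a * hlp - conj z * hE'

lemma commute_iff {p lam : ℂ} {W : H2 →L[ℂ] H2} {C : H2 → H2} (hc : c ≠ 0) (hp : ‖p‖ < 1)
    (hlam : ‖lam‖ = 1) (hlp : lam * p = conj p) (hW : IsWCompOp ψ φ W) (hCJ : IsJW p lam C) :
    (∀ x : H2, W (C x) = C (W x)) ↔ conj a + t * p = p - a * conj lam := by
  constructor
  · intro hcomm
    have hhalf : ‖(1 / 2 : ℂ)‖ < 1 := by norm_num
    have := (h.weight_eq_iff hc hp hlam hlp hhalf).mp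
      (hW.weight_eq_of_commute hp hlam hCJ h.mapsTo hcomm hhalf)
    exact mul_right_cancel₀ (by norm_num) this
  · intro hE
    exact hW.commute_of_weight_eq hp hlam hCJ h.mapsTo
      (fun z hz => (h.weight_eq_iff hc hp hlam hlp hz).mpr (by rw [hE]))
      (fun z hz => h.tau_comm hp hlam hlp hE hz)

lemma comp_self (ha : ‖a‖ < 1) :
    IsLinFracSymbol (a * ((t + 1) / (1 - ‖a‖ ^ 2) : ℝ)) ((t ^ 2 - ‖a‖ ^ 2) / (1 - ‖a‖ ^ 2))
      (c ^ 2 / (1 - ‖a‖ ^ 2)) (fun z => ψ z * ψ (φ z)) (φ ∘ φ) := by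
  have hD : (1 - ‖a‖ ^ 2 : ℂ) ≠ 0 := by
    have : 0 < 1 - ‖a‖ ^ 2 := by nlinarith [norm_nonneg a]
    exact_mod_cast this.ne'
  have hconj : conj (a * ((t + 1) / (1 - ‖a‖ ^ 2) : ℝ)) = conj a * (t + 1) / (1 - ‖a‖ ^ 2) := by
    rw [map_mul, Complex.conj_ofReal]
    push_cast
    ring
  have hden₂ : ∀ z : ℂ, ‖z‖ < 1 → (1 - conj a * z) * (1 - conj a * φ z)
      = (1 - ‖a‖ ^ 2) * (1 - conj (a * ((t + 1) / (1 - ‖a‖ ^ 2) : ℝ)) * z) := by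
    intro z hz
    rw [h.phi_eq z hz, one_sub_mul_linFrac (h.den_ne_zero z hz), hconj]
    field_simp
    rw [← Complex.mul_conj']
    ring
  refine ⟨fun z hz => ?_, fun z hz => ?_, fun z hz => ?_, fun z hz => h.mapsTo _ (h.mapsTo z hz)⟩
  · rw [Function.comp_apply, h.phi_eq _ (h.mapsTo z hz), h.phi_eq z hz,
      affine_div_affine_comp (h.den_ne_zero z hz), hconj]
    push_cast
    field_simp
    rw [← Complex.mul_conj']
    ring
  · rw [h.psi_eq z hz, h.psi_eq _ (h.mapsTo z hz), div_mul_div_comm, hden₂ z hz]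
    push_cast
    field_simp
  · have := mul_ne_zero (h.den_ne_zero z hz) (h.den_ne_zero _ (h.mapsTo z hz))
    rw [hden₂ z hz] at this
    exact right_ne_zero_of_mul this

end IsLinFracSymbol

end H2

/-- With `φ(z) = a₀ + a₁ z/(1 - conj a₀ * z)` and `ψ(z) = a₂/(1 - conj a₀ * z)`
(`a₀ ∈ 𝔻`, `a₁, a₂ ∈ ℝ`), `W_{ψ,φ}` is `J W_{ξ_p,τ_p}`-normal and Hermitian iff
`((a₁ - |a₀|²)² - 1)|p|² = -2 (a₁ - |a₀|² + 1) Re(a₀ p)`. -/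
theorem stmt11 (a₀ : ℂ) (a₁ a₂ : ℝ) (ha₀ : ‖a₀‖ < 1) (ha₂ : a₂ ≠ 0)
    (p lam : ℂ) (hp : ‖p‖ < 1) (hp0 : p ≠ 0) (hlam : ‖lam‖ = 1) (hlp : lam * p = conj p)
    (φ : ℂ → ℂ) (hφ : ∀ z : ℂ, φ z = a₀ + (a₁ : ℂ) * z / (1 - conj a₀ * z))
    (hself : ∀ z : ℂ, ‖z‖ < 1 → ‖φ z‖ < 1)
    (ψ : ℂ → ℂ) (hψ : ∀ z : ℂ, ψ z = (a₂ : ℂ) / (1 - conj a₀ * z))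
    (W : H2 →L[ℂ] H2) (hW : H2.IsWCompOp ψ φ W)
    (C : H2 → H2) (hC : H2.IsConjugation C) (hCJ : H2.IsJW p lam C) :
    (H2.CNormal C W ∧ ContinuousLinearMap.adjoint W = W) ↔
      ((a₁ - ‖a₀‖ ^ 2) ^ 2 - 1) * ‖p‖ ^ 2
        = -2 * (a₁ - ‖a₀‖ ^ 2 + 1) * (a₀ * p).re := by
  have hD : 0 < 1 - ‖a₀‖ ^ 2 := by nlinarith [norm_nonneg a₀]
  have hsym : H2.IsLinFracSymbol a₀ (a₁ - ‖a₀‖ ^ 2) a₂ ψ φ :=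
    { phi_eq := fun z hz => by
        have := H2.one_sub_conj_mul_ne_zero ha₀ hz
        rw [hφ z, eq_div_iff this, add_mul, div_mul_cancel₀ _ this]
        push_cast
        rw [← Complex.mul_conj']
        ring
      psi_eq := fun z _ => hψ z
      den_ne_zero := fun _ hz => H2.one_sub_conj_mul_ne_zero ha₀ hz
      mapsTo := hself }
  have hadj := hsym.adjoint_eq_self hW
  have hc : a₂ ^ 2 / (1 - ‖a₀‖ ^ 2) ≠ 0 := div_ne_zero (pow_ne_zero 2 ha₂) hD.ne'
  rw [H2.cNormal_iff_of_adjoint_eq_self hC.invol hadj, and_iff_left hadj,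
    (hsym.comp_self ha₀).commute_iff hc hp hlam hlp (hW.comp hW hself) hCJ,
    H2.conj_add_mul_eq_sub_mul_iff hp0 hlp, mul_right_comm, Complex.re_mul_ofReal]
  field_simp
  constructor <;> intro h <;> linarith
end
end
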